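/- Let g ∈ GH^∞ (invertible in H^∞) and R_n h = T_g h + Σ_{i=1}^n ⟨h, u_i⟩ v_i on H^2 with {u_i} orthonormal and {v_i} orthogonal. Then Ker R_n is nearly S*-invariant with defect at most n and defect space F = span{T_{g^{-1}}(S* v_i) : 1 ≤ i ≤ n}: for h ∈ Ker R_n with h(0) = 0, setting w = Σ_k ⟨h, u_k⟩ T_{g^{-1}}(S*v_k) = Σ_k ⟨h, u_k⟩ g^{-1}·S*v_k, one has S*h + w ∈ Ker R_n. -/

import Mathlib

open MeasureTheory Complex Real ComplexConjugate
open scoped ENNReal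

noncomputable section

instance : Fact (0 < 2 * π) := ⟨by positivity⟩

/-- The unit circle, modelled as `ℝ / 2πℤ`. -/
abbrev UnitCircle : Type := AddCircle (2 * π)

/-- Normalized Haar (Lebesgue) measure on the circle. -/
abbrev μc : Measure UnitCircle := AddCircle.haarAddCircle

/-- The space `L²(𝕋)`. -/
abbrev L2T : Type := Lp ℂ 2 μc

/-- The Hardy space `H²`, the closed span of `{eⁱⁿᵗ : n ≥ 0}` inside `L²(𝕋)`. -/
def H2 : Submodule ℂ L2T :=
  (Submodule.span ℂ (Set.range fun n : ℕ => (fourierLp 2 (n : ℤ) : L2T))).topologicalClosure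

instance : CompleteSpace H2 :=
  IsComplete.completeSpace_coe (Submodule.isClosed_topologicalClosure _).isComplete

/-- The orthogonal projection `P : L²(𝕋) → H²`. -/
def PH2 : L2T →L[ℂ] H2 := Submodule.orthogonalProjectionOnto H2

/-- Multiplication of an `L²` function by an essentially bounded symbol. -/
def symbMul (g : UnitCircle → ℂ) (hg : MemLp g ∞ μc) (f : L2T) : L2T :=
  ((Lp.memLp f).smul (p := ∞) (r := 2) hg).toLp (g • ⇑f)

/-- The Toeplitz operator `T_g f = P(gf)`, viewed as a map `L²(𝕋) → L²(𝕋)`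
(its restriction to `H²` is the classical Toeplitz operator). -/
def Toeplitz (g : UnitCircle → ℂ) (hg : MemLp g ∞ μc) (f : L2T) : L2T :=
  (PH2 (symbMul g hg f) : L2T)

/-- The boundary coordinate function `z = eⁱᵗ` on the circle. -/
def zfun : UnitCircle → ℂ := fun x => fourier 1 x

lemma zfun_memLinfty : MemLp zfun ∞ μc := by
  refine memLp_top_of_bound ((fourier 1).continuous.aestronglyMeasurable) 1 ?_
  filter_upwards with x
  simp [zfun, Circle.norm_coe]

lemma conj_zfun_memLinfty : MemLp (fun x => conj (zfun x)) ∞ μc := by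
  refine memLp_top_of_bound (Continuous.aestronglyMeasurable (Complex.continuous_conj.comp ((fourier 1).continuous))) 1 ?_
  filter_upwards with x
  simp [zfun, Circle.norm_coe]

/-- The backward shift `S* = T_{z̄}` on `L²`; its restriction to `H²` is the classical
backward shift `(S^*f)(z) = (f(z)-f(0))/z`. -/
def Sstar (f : L2T) : L2T := Toeplitz (fun x => conj (zfun x)) conj_zfun_memLinfty f

/-- Evaluation of (the analytic extension of) `f` at the origin: the mean value `f(0) = ∫ f`. -/
def ev0 (f : L2T) : ℂ := ∫ x, f x ∂μc

/-- The constant function `1` as an element of `L²(𝕋)` (it is `e⁰`). -/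
def onefun : L2T := fourierLp 2 (0 : ℤ)

lemma zpow_memLinfty (m : ℕ) : MemLp (fun x => zfun x ^ m) ∞ μc := by
  refine memLp_top_of_bound (Continuous.aestronglyMeasurable (by
    exact Continuous.pow (fourier 1).continuous m)) 1 ?_
  filter_upwards with x
  simp [zfun, Circle.norm_coe]

/-- An essentially bounded symbol is in particular square-integrable: the associated `L²`
element. -/
def toL2 (g : UnitCircle → ℂ) (hg : MemLp g ∞ μc) : L2T :=
  (hg.mono_exponent le_top).toLp g

/-- A bounded symbol `g` is *analytic* (i.e. belongs to `H^∞`) iff multiplication by `g`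
preserves the Hardy space `H²`. -/
def IsAnalytic (g : UnitCircle → ℂ) (hg : MemLp g ∞ μc) : Prop :=
  ∀ f : L2T, f ∈ H2 → symbMul g hg f ∈ H2

/-- A bounded symbol is *inner* if it is analytic and unimodular a.e. on the circle. -/
def IsInner (g : UnitCircle → ℂ) (hg : MemLp g ∞ μc) : Prop :=
  IsAnalytic g hg ∧ ∀ᵐ x ∂μc, ‖g x‖ = 1

/-- The subspace `θ·H²` of `L²(𝕋)`. -/
def mulH2 (θ : UnitCircle → ℂ) (hθ : MemLp θ ∞ μc) : Submodule ℂ L2T :=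
  Submodule.span ℂ {f : L2T | ∃ h ∈ H2, f = symbMul θ hθ h}

/-- The model space `K_θ = H² ⊖ θH²`. -/
def Kmodel (θ : UnitCircle → ℂ) (hθ : MemLp θ ∞ μc) : Submodule ℂ L2T :=
  H2 ⊓ (mulH2 θ hθ)ᗮ

instance (θ : UnitCircle → ℂ) (hθ : MemLp θ ∞ μc) : CompleteSpace (Kmodel θ hθ) := by
  refine IsComplete.completeSpace_coe (IsClosed.isComplete ?_)
  have : ((Kmodel θ hθ : Submodule ℂ L2T) : Set L2T)
      = (H2 : Set L2T) ∩ ((mulH2 θ hθ)ᗮ : Set L2T) := rfl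
  rw [this]
  exact (Submodule.isClosed_topologicalClosure _).inter (Submodule.isClosed_orthogonal _)

/-- An element `u ∈ H²` is *outer* if the polynomial multiples of `u` are dense in `H²`
(Beurling). -/
def IsOuterL2 (uL : L2T) : Prop :=
  (Submodule.span ℂ
    (Set.range fun n : ℕ => symbMul (fun x => zfun x ^ n) (zpow_memLinfty n) uL)).topologicalClosure
    = H2

open scoped ComplexInnerProductSpace

instance (U : Submodule ℂ L2T) : CompleteSpace (H2 ⊓ Uᗮ : Submodule ℂ L2T) := by
  refine IsComplete.completeSpace_coe (IsClosed.isComplete ?_)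
  have : ((H2 ⊓ Uᗮ : Submodule ℂ L2T) : Set L2T) = (H2 : Set L2T) ∩ (Uᗮ : Set L2T) := rfl
  rw [this]
  exact (Submodule.isClosed_topologicalClosure _).inter (Submodule.isClosed_orthogonal _)

section Helpers
set_option maxHeartbeats 1000000

lemma symbMul_ae (g : UnitCircle → ℂ) (hg : MemLp g ∞ μc) (f : L2T) :
    ⇑(symbMul g hg f) =ᵐ[μc] fun x => g x * f x := by
  filter_upwards [MemLp.coeFn_toLp ((Lp.memLp f).smul (p := ∞) (r := 2) hg)] with x hx
  simpa [symbMul] using hx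

lemma symbMul_add (g : UnitCircle → ℂ) (hg : MemLp g ∞ μc) (f f' : L2T) :
    symbMul g hg (f + f') = symbMul g hg f + symbMul g hg f' := by
  apply Lp.ext
  filter_upwards [symbMul_ae g hg (f + f'), symbMul_ae g hg f, symbMul_ae g hg f',
    Lp.coeFn_add f f', Lp.coeFn_add (symbMul g hg f) (symbMul g hg f')] with x h1 h2 h3 h4 h5
  rw [h5, h1, h4]
  simp only [Pi.add_apply, h2, h3]
  ring

lemma symbMul_smul (g : UnitCircle → ℂ) (hg : MemLp g ∞ μc) (c : ℂ) (f : L2T) :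
    symbMul g hg (c • f) = c • symbMul g hg f := by
  apply Lp.ext
  filter_upwards [symbMul_ae g hg (c • f), symbMul_ae g hg f,
    Lp.coeFn_smul c f, Lp.coeFn_smul c (symbMul g hg f)] with x h1 h2 h3 h4
  rw [h4, h1, h3]
  simp only [Pi.smul_apply, smul_eq_mul, h2]
  ring

/-- `symbMul` bundled as a linear map. -/
def symbMulL (g : UnitCircle → ℂ) (hg : MemLp g ∞ μc) : L2T →ₗ[ℂ] L2T where
  toFun := symbMul g hg
  map_add' := symbMul_add g hg
  map_smul' := symbMul_smul g hg

lemma symbMul_comm (a b : UnitCircle → ℂ) (ha : MemLp a ∞ μc) (hb : MemLp b ∞ μc) (f : L2T) :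
    symbMul a ha (symbMul b hb f) = symbMul b hb (symbMul a ha f) := by
  apply Lp.ext
  filter_upwards [symbMul_ae a ha (symbMul b hb f), symbMul_ae b hb f,
    symbMul_ae b hb (symbMul a ha f), symbMul_ae a ha f] with x h1 h2 h3 h4
  rw [h1, h2, h3, h4]
  ring

lemma symbMul_cancel (a b : UnitCircle → ℂ) (ha : MemLp a ∞ μc) (hb : MemLp b ∞ μc)
    (hab : ∀ᵐ x ∂μc, a x * b x = 1) (f : L2T) :
    symbMul a ha (symbMul b hb f) = f := by
  apply Lp.ext
  filter_upwards [symbMul_ae a ha (symbMul b hb f), symbMul_ae b hb f, hab] with x h1 h2 h3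
  rw [h1, h2, ← mul_assoc, h3, one_mul]

lemma symbMul_zero (g : UnitCircle → ℂ) (hg : MemLp g ∞ μc) :
    symbMul g hg 0 = 0 := by
  apply Lp.ext
  filter_upwards [symbMul_ae g hg 0, Lp.coeFn_zero (E := ℂ) (p := 2) (μ := μc)] with x h1 h2
  rw [h2, h1, h2]
  simp

lemma inner_fourierLp (m : ℤ) (f : L2T) :
    ⟪(fourierLp 2 m : L2T), f⟫ = ∫ x, conj (fourier m x) * f x ∂μc := by
  rw [MeasureTheory.L2.inner_def]
  refine integral_congr_ae ?_
  filter_upwards [coeFn_fourierLp 2 m] with x hx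
  rw [hx, RCLike.inner_apply, mul_comm]

lemma inner_fourierLp_shift (m : ℤ) (f : L2T) :
    ⟪(fourierLp 2 m : L2T), symbMul (fun x => conj (zfun x)) conj_zfun_memLinfty f⟫
      = ⟪(fourierLp 2 (m + 1) : L2T), f⟫ := by
  rw [inner_fourierLp, inner_fourierLp]
  refine integral_congr_ae ?_
  filter_upwards [symbMul_ae _ conj_zfun_memLinfty f] with x hx
  rw [hx]
  have h2 : fourier (m + 1) x = fourier m x * fourier 1 x := fourier_add
  rw [h2, map_mul]
  show conj (fourier m x) * (conj (zfun x) * f x) = _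
  rw [zfun]
  ring

lemma coeff_zero_of_mem_H2 {f : L2T} (hf : f ∈ H2) {m : ℤ} (hm : m < 0) :
    ⟪(fourierLp 2 m : L2T), f⟫ = 0 := by
  have horth := orthonormal_iff_ite.mp (orthonormal_fourier (T := 2 * π))
  have hle : H2 ≤ (ℂ ∙ (fourierLp 2 m : L2T))ᗮ := by
    refine Submodule.topologicalClosure_minimal _ ?_ (Submodule.isClosed_orthogonal _)
    rw [Submodule.span_le]
    rintro y ⟨k, rfl⟩
    rw [SetLike.mem_coe, Submodule.mem_orthogonal]
    intro u hu
    rcases Submodule.mem_span_singleton.mp hu with ⟨c, rfl⟩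
    rw [inner_smul_left, horth m k]
    have : m ≠ (k : ℤ) := by omega
    simp [this]
  exact Submodule.inner_right_of_mem_orthogonal
    (Submodule.mem_span_singleton_self (fourierLp 2 m : L2T)) (hle hf)

lemma mem_closure_span_of_coeff (N : ℤ) (f : L2T)
    (hf : ∀ m : ℤ, m < N → ⟪(fourierLp 2 m : L2T), f⟫ = 0) :
    f ∈ (Submodule.span ℂ
      (Set.range fun k : ℕ => (fourierLp 2 (N + k) : L2T))).topologicalClosure := by
  have hsum := (fourierBasis (T := 2 * π)).hasSum_repr f
  rw [← SetLike.mem_coe, Submodule.topologicalClosure_coe]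
  refine mem_closure_of_tendsto hsum (Filter.Eventually.of_forall fun s => ?_)
  refine Submodule.sum_mem _ fun i _ => ?_
  by_cases hi : i < N
  · have h0 : fourierBasis.repr f i = 0 := by
      rw [fourierBasis.repr_apply_apply, coe_fourierBasis]
      exact hf i hi
    rw [h0, zero_smul]
    exact Submodule.zero_mem _
  · push_neg at hi
    have hidx : N + (((i - N).toNat : ℕ) : ℤ) = i := by omega
    refine Submodule.smul_mem _ _ (Submodule.subset_span ⟨(i - N).toNat, ?_⟩)
    show (fourierLp 2 (N + (((i - N).toNat : ℕ) : ℤ)) : L2T) = _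
    rw [hidx, coe_fourierBasis]

lemma mem_H2_of_coeff {f : L2T} (hf : ∀ m : ℤ, m < 0 → ⟪(fourierLp 2 m : L2T), f⟫ = 0) :
    f ∈ H2 := by
  have h := mem_closure_span_of_coeff 0 f hf
  have he : (fun k : ℕ => (fourierLp 2 ((0 : ℤ) + k) : L2T))
      = fun n : ℕ => (fourierLp 2 (n : ℤ) : L2T) := by
    funext k; norm_num
  rw [H2]
  rw [he] at h
  exact h

lemma fourierLp_mem_H2 {m : ℤ} (hm : 0 ≤ m) : (fourierLp 2 m : L2T) ∈ H2 := by
  apply Submodule.le_topologicalClosure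
  refine Submodule.subset_span ⟨m.toNat, ?_⟩
  show (fourierLp 2 ((m.toNat : ℕ) : ℤ) : L2T) = _
  rw [Int.toNat_of_nonneg hm]

lemma PH2_of_mem {f : L2T} (hf : f ∈ H2) : (PH2 f : L2T) = f :=
  (Submodule.starProjection_eq_self_iff (K := H2)).mpr hf

lemma Toeplitz_mem (g : UnitCircle → ℂ) (hg : MemLp g ∞ μc) (f : L2T) :
    Toeplitz g hg f ∈ H2 := SetLike.coe_mem _

lemma Toeplitz_of_mem {g : UnitCircle → ℂ} {hg : MemLp g ∞ μc} {f : L2T}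
    (h : symbMul g hg f ∈ H2) : Toeplitz g hg f = symbMul g hg f :=
  PH2_of_mem h

lemma Sstar_mem (f : L2T) : Sstar f ∈ H2 := SetLike.coe_mem _

lemma inner_one_eq_ev0 (f : L2T) : ⟪(fourierLp 2 (0 : ℤ) : L2T), f⟫ = ev0 f := by
  rw [inner_fourierLp, ev0]
  refine integral_congr_ae (Filter.Eventually.of_forall fun x => ?_)
  simp

lemma eq_zero_of_coeff {x : L2T} (hx : ∀ m : ℤ, ⟪(fourierLp 2 m : L2T), x⟫ = 0) : x = 0 := by
  have htop : (Submodule.span ℂ (Set.range (fourierLp 2 : ℤ → L2T))).topologicalClosure = ⊤ := by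
    have h := (fourierBasis (T := 2 * π)).dense_span
    rwa [coe_fourierBasis] at h
  have hle : (Submodule.span ℂ (Set.range (fourierLp 2 : ℤ → L2T))).topologicalClosure
      ≤ (ℂ ∙ x)ᗮ := by
    refine Submodule.topologicalClosure_minimal _ ?_ (Submodule.isClosed_orthogonal _)
    rw [Submodule.span_le]
    rintro y ⟨m, rfl⟩
    rw [SetLike.mem_coe, Submodule.mem_orthogonal]
    intro u hu
    rcases Submodule.mem_span_singleton.mp hu with ⟨c, rfl⟩
    rw [inner_smul_left, ← inner_conj_symm, hx m, map_zero, mul_zero]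
  have hxmem : x ∈ (ℂ ∙ x)ᗮ := hle (htop ▸ Submodule.mem_top)
  have h2 := Submodule.inner_right_of_mem_orthogonal (Submodule.mem_span_singleton_self x) hxmem
  simpa using h2

end Helpers
section Helpers2
set_option maxHeartbeats 1000000

lemma toL2_ae (g : UnitCircle → ℂ) (hg : MemLp g ∞ μc) :
    ⇑(toL2 g hg) =ᵐ[μc] g :=
  MemLp.coeFn_toLp _

lemma onefun_mem_H2 : onefun ∈ H2 := fourierLp_mem_H2 le_rfl

lemma toL2_eq_symbMul_onefun (g : UnitCircle → ℂ) (hg : MemLp g ∞ μc) :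
    toL2 g hg = symbMul g hg onefun := by
  apply Lp.ext
  filter_upwards [toL2_ae g hg, symbMul_ae g hg onefun, coeFn_fourierLp 2 (0 : ℤ)]
    with x h1 h2 h3
  rw [h1, h2]
  show g x = g x * (fourierLp 2 (0 : ℤ) : L2T) x
  rw [h3]
  simp

lemma toL2_mem_H2 {g : UnitCircle → ℂ} {hg : MemLp g ∞ μc} (hag : IsAnalytic g hg) :
    toL2 g hg ∈ H2 := by
  rw [toL2_eq_symbMul_onefun]
  exact hag onefun onefun_mem_H2

/-- If `g ∈ H^∞` and `h ∈ H²` has mean zero, then `∫ g h = 0`. -/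
lemma inner_one_symbMul_eq_zero {g : UnitCircle → ℂ} {hg : MemLp g ∞ μc}
    (hag : IsAnalytic g hg) {h : L2T} (hh : h ∈ H2)
    (h0 : ⟪(fourierLp 2 (0 : ℤ) : L2T), h⟫ = 0) :
    ⟪(fourierLp 2 (0 : ℤ) : L2T), symbMul g hg h⟫ = 0 := by
  have hcg : MemLp (fun x => conj (g x)) ∞ μc :=
    hg.of_le (Complex.continuous_conj.comp_aestronglyMeasurable hg.aestronglyMeasurable)
      (Filter.Eventually.of_forall fun x => by simp)
  have key : ⟪(fourierLp 2 (0 : ℤ) : L2T), symbMul g hg h⟫ = ⟪toL2 _ hcg, h⟫ := by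
    rw [inner_fourierLp, MeasureTheory.L2.inner_def]
    refine integral_congr_ae ?_
    filter_upwards [symbMul_ae g hg h, toL2_ae _ hcg] with x h1 h2
    rw [h1]
    show conj (fourier (0 : ℤ) x) * (g x * h x) = ⟪(toL2 _ hcg : L2T) x, h x⟫
    rw [RCLike.inner_apply, h2]
    simp
    ring
  rw [key]
  have hmem := mem_closure_span_of_coeff 1 h (fun m hm => by
    rcases lt_or_ge m 0 with hneg | hpos
    · exact coeff_zero_of_mem_H2 hh hneg
    · have hm0 : m = 0 := by omega
      rw [hm0]; exact h0)
  have hle : (Submodule.span ℂ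
      (Set.range fun k : ℕ => (fourierLp 2 ((1 : ℤ) + k) : L2T))).topologicalClosure
      ≤ (ℂ ∙ (toL2 _ hcg : L2T))ᗮ := by
    refine Submodule.topologicalClosure_minimal _ ?_ (Submodule.isClosed_orthogonal _)
    rw [Submodule.span_le]
    rintro y ⟨k, rfl⟩
    rw [SetLike.mem_coe, Submodule.mem_orthogonal]
    intro u hu
    rcases Submodule.mem_span_singleton.mp hu with ⟨c, rfl⟩
    rw [inner_smul_left]
    have hval : ⟪(toL2 _ hcg : L2T), (fourierLp 2 ((1 : ℤ) + k) : L2T)⟫ = 0 := by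
      rw [← inner_conj_symm]
      have hstep : ⟪(fourierLp 2 ((1 : ℤ) + k) : L2T), (toL2 _ hcg : L2T)⟫
          = conj ⟪(fourierLp 2 (-((1 : ℤ) + k)) : L2T), toL2 g hg⟫ := by
        rw [inner_fourierLp, inner_fourierLp, ← integral_conj]
        refine integral_congr_ae ?_
        filter_upwards [toL2_ae _ hcg, toL2_ae g hg] with x h1 h2
        rw [h1, h2, map_mul]
        have hfn : fourier (-((1 : ℤ) + k)) x = conj (fourier ((1 : ℤ) + k) x) := fourier_neg
        rw [hfn]
        simp
      rw [hstep, coeff_zero_of_mem_H2 (toL2_mem_H2 hag) (by omega : -((1 : ℤ) + k) < 0)]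
      simp
    rw [hval, mul_zero]
  exact Submodule.inner_right_of_mem_orthogonal
    (Submodule.mem_span_singleton_self _) (hle hmem)

lemma Sstar_eq_symbMul {h : L2T} (hh : h ∈ H2)
    (h0 : ⟪(fourierLp 2 (0 : ℤ) : L2T), h⟫ = 0) :
    Sstar h = symbMul (fun x => conj (zfun x)) conj_zfun_memLinfty h := by
  refine Toeplitz_of_mem (mem_H2_of_coeff fun m hm => ?_)
  rw [inner_fourierLp_shift]
  rcases lt_or_ge (m + 1) 0 with hneg | hpos
  · exact coeff_zero_of_mem_H2 hh hneg
  · have hm0 : m + 1 = 0 := by omega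
    rw [hm0]; exact h0

end Helpers2
section Helpers3
set_option maxHeartbeats 1000000

lemma symbMul_finsum {ι : Type*} (s : Finset ι) (g : UnitCircle → ℂ) (hg : MemLp g ∞ μc)
    (c : ι → ℂ) (f : ι → L2T) :
    symbMul g hg (∑ k ∈ s, c k • f k) = ∑ k ∈ s, c k • symbMul g hg (f k) := by
  classical
  induction s using Finset.induction with
  | empty => simp [symbMul_zero]
  | insert a s hnm ih =>
      rw [Finset.sum_insert hnm, symbMul_add, symbMul_smul, ih, Finset.sum_insert hnm]

lemma symbMul_neg (g : UnitCircle → ℂ) (hg : MemLp g ∞ μc) (f : L2T) :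
    symbMul g hg (-f) = -symbMul g hg f := by
  have h1 := symbMul_add g hg f (-f)
  rw [add_neg_cancel, symbMul_zero] at h1
  exact eq_neg_of_add_eq_zero_right h1.symm

lemma Toeplitz_zero (g : UnitCircle → ℂ) (hg : MemLp g ∞ μc) :
    Toeplitz g hg 0 = 0 := by
  rw [Toeplitz, symbMul_zero, map_zero, ZeroMemClass.coe_zero]

end Helpers3
set_option maxHeartbeats 1600000 in
/-- For `g` invertible in `H^∞` and `Rₙh = T_g h + Σ ⟨h,uᵢ⟩vᵢ`, the kernel
of `Rₙ` is nearly `S*`-invariant with defect at most `n` and defect space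
`F = span{T_{g⁻¹}(S*vᵢ)}`; explicitly, for `h ∈ Ker Rₙ` with `h(0) = 0` and
`w = Σ ⟨h,u_k⟩ T_{g⁻¹}(S*v_k) = Σ ⟨h,u_k⟩ g⁻¹·S*v_k`, one has `S*h + w ∈ Ker Rₙ`. -/
theorem kernel_perturbed_toeplitz_invertible_analytic_nearly_Sstar_invariant
    (n : ℕ) (g ginv : UnitCircle → ℂ)
    (hg : MemLp g ∞ μc) (hgi : MemLp ginv ∞ μc)
    (hag : IsAnalytic g hg) (hagi : IsAnalytic ginv hgi)
    (hinv : ∀ᵐ x ∂μc, g x * ginv x = 1)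
    (u v : Fin n → L2T)
    (hu : ∀ i, u i ∈ H2) (huon : Orthonormal ℂ u)
    (hv : ∀ i, v i ∈ H2) (hvorth : ∀ i j, i ≠ j → ⟪v i, v j⟫ = 0) :
    Module.finrank ℂ
        (Submodule.span ℂ (Set.range fun i => Toeplitz ginv hgi (Sstar (v i)))) ≤ n
    ∧ ∀ h ∈ H2, (Toeplitz g hg h + ∑ i, ⟪u i, h⟫ • v i = 0) → ev0 h = 0 →
        (∑ k, ⟪u k, h⟫ • Toeplitz ginv hgi (Sstar (v k)))
            = ∑ k, ⟪u k, h⟫ • symbMul ginv hgi (Sstar (v k))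
        ∧ (∑ k, ⟪u k, h⟫ • Toeplitz ginv hgi (Sstar (v k))) ∈
            Submodule.span ℂ (Set.range fun i => Toeplitz ginv hgi (Sstar (v i)))
        ∧ Sstar h + (∑ k, ⟪u k, h⟫ • Toeplitz ginv hgi (Sstar (v k))) ∈ H2
        ∧ Toeplitz g hg (Sstar h + ∑ k, ⟪u k, h⟫ • Toeplitz ginv hgi (Sstar (v k)))
            + ∑ i, ⟪u i, Sstar h + ∑ k, ⟪u k, h⟫ • Toeplitz ginv hgi (Sstar (v k))⟫ • v i
            = 0 := by
  classical
  constructor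
  · refine (finrank_span_le_card _).trans ?_
    rw [Set.toFinset_range]
    exact Finset.card_image_le.trans (by simp)
  · intro h hh hker hev
    have h0 : ⟪(fourierLp 2 (0 : ℤ) : L2T), h⟫ = 0 := by
      rw [inner_one_eq_ev0]; exact hev
    have hTg : Toeplitz g hg h = symbMul g hg h := Toeplitz_of_mem (hag h hh)
    rw [hTg] at hker
    have hA : symbMul g hg h = -∑ i, ⟪u i, h⟫ • v i := eq_neg_of_add_eq_zero_left hker
    have hAs : (∑ i, ⟪u i, h⟫ • v i) = -(symbMul g hg h) := by rw [hA, neg_neg]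
    -- conjunct 1
    have hc1 : (∑ k, ⟪u k, h⟫ • Toeplitz ginv hgi (Sstar (v k)))
        = ∑ k, ⟪u k, h⟫ • symbMul ginv hgi (Sstar (v k)) :=
      Finset.sum_congr rfl fun k _ => by
        rw [Toeplitz_of_mem (hagi _ (Sstar_mem (v k)))]
    -- the defect vectors
    have hd : ∀ i, symbMul (fun x => conj (zfun x)) conj_zfun_memLinfty (v i) - Sstar (v i)
        ∈ H2ᗮ := fun i =>
      Submodule.sub_starProjection_mem_orthogonal
        (K := H2) (symbMul (fun x => conj (zfun x)) conj_zfun_memLinfty (v i))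
    set D : L2T := ∑ i, ⟪u i, h⟫ •
      (symbMul (fun x => conj (zfun x)) conj_zfun_memLinfty (v i) - Sstar (v i)) with hDdef
    have hD : D = 0 := by
      refine eq_zero_of_coeff fun m => ?_
      rw [hDdef, inner_sum]
      rcases le_or_gt 0 m with hm | hm
      · refine Finset.sum_eq_zero fun i _ => ?_
        rw [inner_smul_right,
          Submodule.inner_right_of_mem_orthogonal (fourierLp_mem_H2 hm) (hd i), mul_zero]
      · have hterm : ∀ i : Fin n,
            ⟪(fourierLp 2 m : L2T), ⟪u i, h⟫ •
              (symbMul (fun x => conj (zfun x)) conj_zfun_memLinfty (v i) - Sstar (v i))⟫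
            = ⟪u i, h⟫ * ⟪(fourierLp 2 (m + 1) : L2T), v i⟫ := by
          intro i
          rw [inner_smul_right, inner_sub_right, inner_fourierLp_shift,
            coeff_zero_of_mem_H2 (Sstar_mem (v i)) hm, sub_zero]
        rcases lt_or_ge (m + 1) 0 with hm2 | hm2
        · refine Finset.sum_eq_zero fun i _ => ?_
          rw [hterm i, coeff_zero_of_mem_H2 (hv i) hm2, mul_zero]
        · have hm1 : m + 1 = 0 := by omega
          have hcalc : (∑ i, ⟪(fourierLp 2 m : L2T), ⟪u i, h⟫ •
              (symbMul (fun x => conj (zfun x)) conj_zfun_memLinfty (v i) - Sstar (v i))⟫)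
              = ⟪(fourierLp 2 (0 : ℤ) : L2T), ∑ i, ⟪u i, h⟫ • v i⟫ := by
            rw [inner_sum]
            refine Finset.sum_congr rfl fun i _ => ?_
            rw [hterm i, hm1, inner_smul_right]
          rw [hcalc, hAs, inner_neg_right, inner_one_symbMul_eq_zero hag hh h0, neg_zero]
    have hsum_eq : (∑ i, ⟪u i, h⟫ • Sstar (v i))
        = ∑ i, ⟪u i, h⟫ • symbMul (fun x => conj (zfun x)) conj_zfun_memLinfty (v i) := by
      have hsplit : D = (∑ i, ⟪u i, h⟫ •
            symbMul (fun x => conj (zfun x)) conj_zfun_memLinfty (v i))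
          - ∑ i, ⟪u i, h⟫ • Sstar (v i) := by
        rw [hDdef, ← Finset.sum_sub_distrib]
        exact Finset.sum_congr rfl fun i _ => smul_sub _ _ _
      rw [hD] at hsplit
      exact (sub_eq_zero.mp hsplit.symm).symm
    -- compute W
    have hginvg : ∀ᵐ x ∂μc, ginv x * g x = 1 := by
      filter_upwards [hinv] with x hx
      rw [mul_comm]; exact hx
    have hW : (∑ k, ⟪u k, h⟫ • Toeplitz ginv hgi (Sstar (v k)))
        = -(symbMul (fun x => conj (zfun x)) conj_zfun_memLinfty h) := by
      rw [hc1, ← symbMul_finsum, hsum_eq, ← symbMul_finsum, hAs, symbMul_neg, symbMul_neg,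
        symbMul_comm _ g _ hg, symbMul_cancel ginv g hgi hg hginvg]
    have hSW : Sstar h + (∑ k, ⟪u k, h⟫ • Toeplitz ginv hgi (Sstar (v k))) = 0 := by
      rw [hW, Sstar_eq_symbMul hh h0, add_neg_cancel]
    refine ⟨hc1, ?_, ?_, ?_⟩
    · exact Submodule.sum_mem _ fun k _ =>
        Submodule.smul_mem _ _ (Submodule.subset_span ⟨k, rfl⟩)
    · rw [hSW]; exact Submodule.zero_mem _
    · rw [hSW, Toeplitz_zero]
      simp
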